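/- In a category with finite limits and colimits, if there exists a span of cospans from cospan f to cospan g (both from x to y), then there exists one from g to f; hence the relation 'there exists a 2-cell f ⇒ g' on 1-cells of Sp(Csp(C)) is symmetric, and the decategorification identifying 1-cells connected by a 2-cell is a well-defined quotient category. -/

import Mathlib

open CategoryTheory CategoryTheory.Limits

universe v u

/-- A cospan from `x` to `y` in a category `C`. -/
structure Cospan (C : Type u) [Category.{v} C] (x y : C) where
  apex : C
  l : x ⟶ apex
  r : y ⟶ apex

variable {C : Type u} [Category.{v} C]

/-- The identity cospan on `x`. -/
def Cospan.id (x : C) : Cospan C x x := ⟨x, 𝟙 x, 𝟙 x⟩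

/-- Composition of cospans by pushout over the shared foot. -/
noncomputable def Cospan.comp [HasPushouts C] {x y z : C}
    (f : Cospan C x y) (g : Cospan C y z) : Cospan C x z :=
  ⟨pushout f.r g.l, f.l ≫ pushout.inl f.r g.l, g.r ≫ pushout.inr f.r g.l⟩

/-- Isomorphism of cospans: an isomorphism of apexes commuting with the legs. -/
def Cospan.Isomorphic {x y : C} (f g : Cospan C x y) : Prop :=
  ∃ e : f.apex ≅ g.apex, f.l ≫ e.hom = g.l ∧ f.r ≫ e.hom = g.r

/--  iff there exists a span of cospans (a 2-cell) from  to . -/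
def SpanOfCospansRel {x y : C} (f g : Cospan C x y) : Prop :=
  ∃ (K : C) (p : K ⟶ f.apex) (q : K ⟶ g.apex) (i : x ⟶ K) (j : y ⟶ K),
    i ≫ p = f.l ∧ i ≫ q = g.l ∧ j ≫ p = f.r ∧ j ≫ q = g.r

namespace SpanOfCospansRel

variable {x y z : C}

@[refl]
theorem refl (f : Cospan C x y) : SpanOfCospansRel f f :=
  ⟨f.apex, 𝟙 _, 𝟙 _, f.l, f.r, by simp, by simp, by simp, by simp⟩

@[symm]
theorem symm {f g : Cospan C x y} : SpanOfCospansRel f g → SpanOfCospansRel g f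
  | ⟨K, p, q, i, j, hp_l, hq_l, hp_r, hq_r⟩ => ⟨K, q, p, i, j, hq_l, hp_l, hq_r, hp_r⟩

@[trans]
theorem trans [HasPullbacks C] {f g h : Cospan C x y} :
    SpanOfCospansRel f g → SpanOfCospansRel g h → SpanOfCospansRel f h := by
  rintro ⟨K, p, q, i, j, hp_l, hq_l, hp_r, hq_r⟩ ⟨K', p', q', i', j', hp'_l, hq'_l, hp'_r, hq'_r⟩
  refine ⟨pullback q p', pullback.fst q p' ≫ p, pullback.snd q p' ≫ q',
    pullback.lift i i' (hq_l.trans hp'_l.symm), pullback.lift j j' (hq_r.trans hp'_r.symm),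
    ?_, ?_, ?_, ?_⟩
  · rw [pullback.lift_fst_assoc, hp_l]
  · rw [pullback.lift_snd_assoc, hq'_l]
  · rw [pullback.lift_fst_assoc, hp_r]
  · rw [pullback.lift_snd_assoc, hq'_r]

theorem equivalence [HasPullbacks C] : Equivalence (SpanOfCospansRel (x := x) (y := y)) :=
  ⟨refl, symm, trans⟩

theorem comp [HasPushouts C] {f g : Cospan C x y} {f' g' : Cospan C y z} :
    SpanOfCospansRel f g → SpanOfCospansRel f' g' →
      SpanOfCospansRel (f.comp f') (g.comp g') := by
  rintro ⟨K, p, q, i, j, hp_l, hq_l, hp_r, hq_r⟩ ⟨K', p', q', i', j', hp'_l, hq'_l, hp'_r, hq'_r⟩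
  unfold Cospan.comp
  refine ⟨pushout j i',
    pushout.desc (p ≫ pushout.inl f.r f'.l) (p' ≫ pushout.inr f.r f'.l)
      (by rw [reassoc_of% hp_r, reassoc_of% hp'_l, pushout.condition]),
    pushout.desc (q ≫ pushout.inl g.r g'.l) (q' ≫ pushout.inr g.r g'.l)
      (by rw [reassoc_of% hq_r, reassoc_of% hq'_l, pushout.condition]),
    i ≫ pushout.inl j i', j' ≫ pushout.inr j i', ?_, ?_, ?_, ?_⟩
  · rw [Category.assoc, pushout.inl_desc, reassoc_of% hp_l]
  · rw [Category.assoc, pushout.inl_desc, reassoc_of% hq_l]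
  · rw [Category.assoc, pushout.inr_desc, reassoc_of% hp'_r]
  · rw [Category.assoc, pushout.inr_desc, reassoc_of% hq'_r]

end SpanOfCospansRel

/-- The relation "there exists a 2-cell " on cospans is symmetric,
reflexive and transitive, and it is a congruence with respect to horizontal
composition of cospans by pushout; hence the quotient yields a category. -/
theorem stmt16 [HasFiniteLimits C] [HasFiniteColimits C] (x y z : C) :
    (∀ f g : Cospan C x y, SpanOfCospansRel f g → SpanOfCospansRel g f) ∧
    Equivalence (SpanOfCospansRel (C := C) (x := x) (y := y)) ∧
    (∀ (f g : Cospan C x y) (f' g' : Cospan C y z),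
      SpanOfCospansRel f g → SpanOfCospansRel f' g' →
        SpanOfCospansRel (f.comp f') (g.comp g')) :=
  ⟨fun _ _ => SpanOfCospansRel.symm, SpanOfCospansRel.equivalence,
    fun _ _ _ _ => SpanOfCospansRel.comp⟩
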